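/- Let 0 < h ≤ 1, 0 ≤ α ≤ 1, t ∈ ℝ, and let k, k₁, k₂, k₃ be integers with |k₁|, |k₂|, |k₃| ≤ π/h, k = k₁+k₂+k₃, 0 < |k| ≤ π/h, k₁k₂k₃ ≠ 0, and (k₁+k₂)(k₂+k₃)(k₁+k₃) ≠ 0. Define 𝓜_h^{3,±}(t,k,k₁,k₂,k₃) = (2/(k₁·Ψ³(k,k₁,k₂,k₃)))·e^{±itΨ³(k,k₁,k₂,k₃)} − (2·sin²(hk/2)·cos(hk/4)·cos(h(k₂+k₃)/4)/(h·k²·sin(hk₁/4)·Φ_h³(k,k₁,k₂,k₃)))·e^{±itΦ_h³(k,k₁,k₂,k₃)}. Then there is an absolute constant C (independent of h, t, α and the frequencies) such that |𝓜_h^{3,±}(t,k,k₁,k₂,k₃)| ≤ C·h^α·(1+|t|)^α·(max(|k|,|k₁|,|k₂|,|k₃|))^{2α}/(|k₁|·max(|k₁|,|k₂|,|k₃|)) (for either choice of sign). -/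

import Mathlib

/-!
Let `m = 2 / (k₁ Ψ³)`, and let `K` and `K'` be the maxima of `|k|, |k₁|, |k₂|, |k₃|` and of
`|k₁|, |k₂|, |k₃|`. Writing every sine as `x · sinc x` gives `Φ_h³ = Ψ³ · S` and turns the FPU
coefficient into `m · F`, where `S` and `F` are products of values of `sinc`, `cos` and `1 / sinc`
at points of modulus at most `hK / 2 ≤ π / 2`; each factor, hence each product, is
`1 + O((hK)²)`. As `2k` and the `2kⱼ` are signed sums of the nonzero integers `k₁ + k₂`,
`k₂ + k₃`, `k₁ + k₃`, each bounded by their product, `|Ψ³| ≳ K` and `|m| ≲ 1 / (|k₁| K)`.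
The triangle inequality bounds the multiplier by `C / (|k₁| K')`, and
`|m - m F| + |m| |t| |Ψ³ - Φ_h³|` bounds it by `C h (1 + |t|) K² / (|k₁| K')`; the claim is the
geometric mean of the two bounds with weights `1 - α` and `α`.
-/

open scoped Real BigOperators ENNReal NNReal
open MeasureTheory

noncomputable section

namespace FPU

/-- `e^{ix}`. -/
def eI (x : ℝ) : ℂ := Complex.exp (Complex.I * x)

/-- Mesh size `h = π / N`. -/
def msh (N : ℕ) : ℝ := Real.pi / N

/-- Frequency/index set `{-N, …, N-1}` of `𝕋_h` (identified with `(𝕋_h)*`). -/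
def dual (N : ℕ) : Finset ℤ := Finset.Icc (-(N : ℤ)) ((N : ℤ) - 1)

/-- Reduction of an integer into `{-N, …, N-1}` modulo `2N`. -/
def red (N : ℕ) (m : ℤ) : ℤ := (m + N) % (2 * N) - N

/-- Complexification of a real lattice function. -/
def cf (f : ℤ → ℝ) : ℤ → ℂ := fun n => (f n : ℂ)

/-- Discrete Fourier coefficient `𝓕_h f (k)` on `𝕋_h`. -/
def dF (N : ℕ) (f : ℤ → ℂ) (k : ℤ) : ℂ :=
  ((msh N / Real.sqrt (2 * Real.pi) : ℝ) : ℂ) *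
    ∑ n ∈ dual N, f n * eI (-(msh N * n * k))

/-- `L²(𝕋_h)` norm. -/
def L2h (N : ℕ) (f : ℤ → ℂ) : ℝ :=
  Real.sqrt (msh N * ∑ n ∈ dual N, ‖f n‖ ^ 2)

/-- `H^s(𝕋_h)` norm. -/
def Hs (N : ℕ) (s : ℝ) (f : ℤ → ℂ) : ℝ :=
  Real.sqrt (∑ k ∈ dual N, (1 + (k : ℝ) ^ 2) ^ s * ‖dF N f k‖ ^ 2)

/-- `ℍ^s(𝕋_h)` norm of a pair. -/
def HsPair (N : ℕ) (s : ℝ) (f g : ℤ → ℂ) : ℝ :=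
  Real.sqrt (Hs N s f ^ 2 + Hs N s g ^ 2)

/-- Fourier multiplier on `𝕋_h` with symbol `m`. -/
def mult (N : ℕ) (m : ℤ → ℂ) (f : ℤ → ℂ) : ℤ → ℂ := fun n =>
  ((1 / Real.sqrt (2 * Real.pi) : ℝ) : ℂ) *
    ∑ k ∈ dual N, m k * dF N f k * eI (msh N * n * k)

/-- Symbol of `∇_h`. -/
def gradSymb (N : ℕ) (k : ℤ) : ℂ :=
  2 * Complex.I / ((msh N : ℝ) : ℂ) * ((Real.sin (msh N * k / 2) : ℝ) : ℂ)

/-- `∇_h`. -/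
def gradh (N : ℕ) : (ℤ → ℂ) → ℤ → ℂ := mult N (gradSymb N)

/-- `∇_h⁻¹` (vanishing at frequency `0`). -/
def gradhInv (N : ℕ) : (ℤ → ℂ) → ℤ → ℂ :=
  mult N fun k => if k = 0 then 0 else (gradSymb N k)⁻¹

/-- The FPU dispersion `s_h(k) = (1/h²)(k - (2/h)sin(hk/2))`. -/
def sh (N : ℕ) (k : ℤ) : ℝ :=
  (1 / msh N ^ 2) * (k - (2 / msh N) * Real.sin (msh N * k / 2))

/-- Linear FPU propagator `S_h^σ(t)`, the multiplier with symbol `e^{iσt·s_h(k)}`. -/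
def Sh (N : ℕ) (σ t : ℝ) : (ℤ → ℂ) → ℤ → ℂ :=
  mult N fun k => eI (σ * t * sh N k)

/-- `e^{σc∂_h}`, the multiplier with symbol `e^{iσck}`. -/
def expDh (N : ℕ) (c : ℝ) : (ℤ → ℂ) → ℤ → ℂ :=
  mult N fun k => eI (c * k)

/-- Coupled FPU integral equation (component with sign `σ`, the other component is `w`). -/
def coupledEq (N : ℕ) (σ T : ℝ) (u0 : ℤ → ℂ) (u w : ℝ → ℤ → ℂ) : Prop :=
  ∀ t ∈ Set.Icc (-T) T, ∀ n : ℤ,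
    u t n = Sh N σ t u0 n - (σ : ℂ) / 4 *
      ∫ t' in (0:ℝ)..t,
        Sh N σ (t - t')
          (gradh N (fun m =>
            (u t' m + expDh N (σ * (2 * t' / msh N ^ 2)) (w t') m) ^ 2)) n

/-- Decoupled FPU integral equation with sign `σ`. -/
def decoupledEq (N : ℕ) (σ T : ℝ) (u0 : ℤ → ℂ) (v : ℝ → ℤ → ℂ) : Prop :=
  ∀ t ∈ Set.Icc (-T) T, ∀ n : ℤ,
    v t n = Sh N σ t u0 n - (σ : ℂ) / 4 *
      ∫ t' in (0:ℝ)..t, Sh N σ (t - t') (gradh N (fun m => (v t' m) ^ 2)) n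

/-- Fourier coefficient on `𝕋 = ℝ/2πℤ`. -/
def tF (f : ℝ → ℂ) (k : ℤ) : ℂ :=
  ((1 / Real.sqrt (2 * Real.pi) : ℝ) : ℂ) *
    ∫ x in (-Real.pi)..Real.pi, f x * eI (-(x * k))

/-- Fourier multiplier on `𝕋`. -/
def tmult (m : ℤ → ℂ) (f : ℝ → ℂ) : ℝ → ℂ := fun x =>
  ((1 / Real.sqrt (2 * Real.pi) : ℝ) : ℂ) * ∑' k : ℤ, m k * tF f k * eI (x * k)

/-- Airy propagator `S^σ(t)`, multiplier with symbol `e^{iσtk³/24}`. -/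
def airy (σ t : ℝ) : (ℝ → ℂ) → ℝ → ℂ :=
  tmult fun k => eI (σ * t * (k : ℝ) ^ 3 / 24)

/-- `∂_x` as a Fourier multiplier on `𝕋`. -/
def tderiv : (ℝ → ℂ) → ℝ → ℂ := tmult fun k => Complex.I * (k : ℂ)

/-- `L²(𝕋)` norm (computed on the Fourier side). -/
def L2T (f : ℝ → ℂ) : ℝ≥0∞ :=
  (∑' k : ℤ, ENNReal.ofReal (‖tF f k‖ ^ 2)) ^ (1/2 : ℝ)

/-- `H^s(𝕋)` norm. -/
def HsT (s : ℝ) (f : ℝ → ℂ) : ℝ≥0∞ :=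
  (∑' k : ℤ, ENNReal.ofReal ((1 + (k : ℝ) ^ 2) ^ s * ‖tF f k‖ ^ 2)) ^ (1/2 : ℝ)

/-- `L²(𝕋)` norm of the sharp frequency projection onto the set `K`. -/
def L2Tproj (K : Set ℤ) (f : ℝ → ℂ) : ℝ≥0∞ :=
  (∑' k : ℤ, ENNReal.ofReal (K.indicator (fun j => ‖tF f j‖ ^ 2) k)) ^ (1/2 : ℝ)

/-- Linear interpolation `𝓛_h` of a lattice function, as a function on `𝕋` (2π-periodic). -/
def interp (N : ℕ) (f : ℤ → ℂ) : ℝ → ℂ := fun x =>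
  f (red N ⌊x / msh N⌋) +
    (f (red N (⌊x / msh N⌋ + 1)) - f (red N ⌊x / msh N⌋)) *
      (((x - msh N * ⌊x / msh N⌋) / msh N : ℝ) : ℂ)

/-- KdV integral equation with sign `σ`. -/
def kdvEq (σ T : ℝ) (w0 : ℝ → ℂ) (w : ℝ → ℝ → ℂ) : Prop :=
  ∀ t ∈ Set.Icc (-T) T, ∀ x : ℝ,
    w t x = airy σ t w0 x - (σ : ℂ) / 4 *
      ∫ t' in (0:ℝ)..t, airy σ (t - t') (tderiv (fun y => (w t' y) ^ 2)) x

/-- Continuity in `H^s(𝕋)` on `[-T,T]`, together with membership in `H^s`. -/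
def contHsT (s T : ℝ) (w : ℝ → ℝ → ℂ) : Prop :=
  ∀ t₀ ∈ Set.Icc (-T) T, HsT s (w t₀) < ⊤ ∧
    ∀ ε : ℝ, 0 < ε → ∃ δ : ℝ, 0 < δ ∧ ∀ t ∈ Set.Icc (-T) T,
      |t - t₀| < δ → HsT s (fun x => w t x - w t₀ x) < ENNReal.ofReal ε

/-- Japanese bracket `⟨x⟩`. -/
def jap (x : ℝ) : ℝ := Real.sqrt (1 + x ^ 2)

/-- Space-time Fourier transform on `ℝ × 𝕋_h`. -/
def stF (N : ℕ) (u : ℝ → ℤ → ℂ) (τ : ℝ) (k : ℤ) : ℂ :=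
  ((msh N / (2 * Real.pi) : ℝ) : ℂ) *
    ∑ n ∈ dual N, ∫ t : ℝ, eI (-(t * τ)) * eI (-(msh N * n * k)) * u t n

/-- Bourgain norm `X^{s,b}_{h,σ}` (with sign `σ = ±1`). -/
def Xnorm (N : ℕ) (σ s b : ℝ) (u : ℝ → ℤ → ℂ) : ℝ≥0∞ :=
  (∑ k ∈ dual N, ∫⁻ τ : ℝ, ENNReal.ofReal
      (jap (k : ℝ) ^ (2 * s) * jap (τ - σ * sh N k) ^ (2 * b) * ‖stF N u τ k‖ ^ 2)) ^ (1/2 : ℝ)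

/-- `Z^s_{h,σ}` norm. -/
def Znorm (N : ℕ) (σ s : ℝ) (u : ℝ → ℤ → ℂ) : ℝ≥0∞ :=
  Xnorm N σ s (-(1/2)) u +
    (∑ k ∈ dual N, (∫⁻ τ : ℝ, ENNReal.ofReal
        (jap (k : ℝ) ^ s * (jap (τ - σ * sh N k))⁻¹ * ‖stF N u τ k‖)) ^ 2) ^ (1/2 : ℝ)

/-- `Y^s_{h,σ}` norm. -/
def Ynorm (N : ℕ) (σ s : ℝ) (u : ℝ → ℤ → ℂ) : ℝ≥0∞ :=
  Xnorm N σ s (1/2) u +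
    (∑ k ∈ dual N, (∫⁻ τ : ℝ, ENNReal.ofReal
        (jap (k : ℝ) ^ s * ‖stF N u τ k‖)) ^ 2) ^ (1/2 : ℝ)

/-- Time restricted norm `Y^{s,T}_{h,σ}` (infimum over extensions). -/
def YnormT (N : ℕ) (σ s T : ℝ) (u : ℝ → ℤ → ℂ) : ℝ≥0∞ :=
  ⨅ g : {g : ℝ → ℤ → ℂ // ∀ t ∈ Set.Icc (-T) T, ∀ n : ℤ, g t n = u t n},
    Ynorm N σ s g.1

/-- `L⁴(ℝ × 𝕋_h)` norm. -/
def L4st (N : ℕ) (u : ℝ → ℤ → ℂ) : ℝ≥0∞ :=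
  (∫⁻ t : ℝ, ENNReal.ofReal (msh N * ∑ n ∈ dual N, ‖u t n‖ ^ 4)) ^ (1/4 : ℝ)

/-- KdV resonance `Ψ²(k,k₁,k₂) = -(1/8)kk₁k₂`. -/
def Psi2 (k k₁ k₂ : ℤ) : ℝ := -(1/8 : ℝ) * (k : ℝ) * (k₁ : ℝ) * (k₂ : ℝ)

/-- KdV cubic resonance `Ψ³ = -(1/8)(a+b)(b+c)(a+c)`. -/
def Psi3 (a b c : ℤ) : ℝ :=
  -(1/8 : ℝ) * (((a + b : ℤ) : ℝ) * ((b + c : ℤ) : ℝ) * ((a + c : ℤ) : ℝ))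

/-- KdV quartic resonance. -/
def Psi4 (k₁ k₂ k₃ k₄ : ℤ) : ℝ := Psi3 (k₁ + k₂) k₃ k₄ + Psi2 (k₁ + k₂) k₁ k₂

/-- FPU resonance `Φ_h²`. -/
def Phi2 (h : ℝ) (k k₁ k₂ : ℤ) : ℝ :=
  -(8 / h ^ 3) *
    (Real.sin (h * k₁ / 4) * Real.sin (h * k₂ / 4) * Real.sin (h * k / 4))

/-- FPU cubic resonance `Φ_h³`. -/
def Phi3 (h : ℝ) (a b c : ℤ) : ℝ :=
  -(8 / h ^ 3) *
    (Real.sin (h * (a + b) / 4) * Real.sin (h * (b + c) / 4) * Real.sin (h * (a + c) / 4))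

/-- FPU quartic resonance `Φ_h⁴`. -/
def Phi4 (h : ℝ) (k₁ k₂ k₃ k₄ : ℤ) : ℝ :=
  Phi3 h (k₁ + k₂) k₃ k₄ + Phi2 h (k₁ + k₂) k₁ k₂

/-- Decoupled FPU profile equation in Fourier variables (sign `σ`), on the time set `I`. -/
def fpuProfileEq (N : ℕ) (σ : ℝ) (u0 : ℤ → ℂ) (V : ℝ → ℤ → ℂ) (I : Set ℝ) : Prop :=
  ∀ t ∈ I, ∀ k ∈ dual N,
    dF N (V t) k = dF N u0 k -
      (σ : ℂ) * Complex.I / (2 * ((msh N : ℝ) : ℂ)) * ((Real.sin (msh N * k / 2) : ℝ) : ℂ) *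
        ∫ t' in (0:ℝ)..t,
          ∑ k₁ ∈ dual N,
            (if k₁ ≠ 0 ∧ k - k₁ ≠ 0 ∧ k - k₁ ∈ dual N then
              eI (σ * t' * Phi2 (msh N) k k₁ (k - k₁)) * dF N (V t') k₁ * dF N (V t') (k - k₁)
            else 0)

/-- KdV profile equation in Fourier variables (sign `σ`), on the time set `I`;
`W t k` denotes the `k`-th Fourier coefficient of the profile at time `t`. -/
def kdvProfileEq (σ : ℝ) (w0 : ℤ → ℂ) (W : ℝ → ℤ → ℂ) (I : Set ℝ) : Prop :=
  ∀ t ∈ I, ∀ k : ℤ,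
    W t k = w0 k -
      (σ : ℂ) * Complex.I * (k : ℂ) / 4 *
        ∫ t' in (0:ℝ)..t,
          ∑' k₁ : ℤ,
            (if k₁ ≠ 0 ∧ k - k₁ ≠ 0 then
              eI (σ * t' * Psi2 k k₁ (k - k₁)) * W t' k₁ * W t' (k - k₁)
            else 0)

/-- `H^s(𝕋)` norm of a Fourier coefficient sequence (extended-real valued). -/
def HsSeq (s : ℝ) (a : ℤ → ℂ) : ℝ≥0∞ :=
  (∑' k : ℤ, ENNReal.ofReal ((1 + (k : ℝ) ^ 2) ^ s * ‖a k‖ ^ 2)) ^ (1/2 : ℝ)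

/-- `H^s(𝕋)` norm of a Fourier coefficient sequence (real valued). -/
def HsSeqR (s : ℝ) (a : ℤ → ℂ) : ℝ :=
  Real.sqrt (∑' k : ℤ, (1 + (k : ℝ) ^ 2) ^ s * ‖a k‖ ^ 2)

/-- `ℓ²(ℤ)` norm of a Fourier coefficient sequence. -/
def l2R (a : ℤ → ℂ) : ℝ := Real.sqrt (∑' k : ℤ, ‖a k‖ ^ 2)

/-- `ℓ²` norm of the projection of a coefficient sequence to the frequency set `K`. -/
def l2projR (K : Set ℤ) (a : ℤ → ℂ) : ℝ :=
  Real.sqrt (∑' k : ℤ, K.indicator (fun j => ‖a j‖ ^ 2) k)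

/-- Periodic discrete Laplacian `Δ_h` on real lattice functions. -/
def lapR (N : ℕ) (f : ℤ → ℝ) (n : ℤ) : ℝ :=
  (f (red N (n + 1)) + f (red N (n - 1)) - 2 * f n) / msh N ^ 2

end FPU

namespace Real

theorem sin_eq_mul_sinc (x : ℝ) : sin x = x * sinc x := by
  rcases eq_or_ne x 0 with rfl | hx
  · simp
  · rw [sinc_of_ne_zero hx, mul_div_cancel₀ _ hx]

theorem abs_sinc_sub_one_le (x : ℝ) : |sinc x - 1| ≤ x ^ 2 / 6 := by
  rcases eq_or_ne x 0 with rfl | hx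
  · simp
  have hx' : 0 < |x| := abs_pos.mpr hx
  have : sinc x - 1 = -((x - sin x) / x) := by rw [sinc_of_ne_zero hx]; field_simp; ring
  rw [this, abs_neg, abs_div, div_le_iff₀ hx', ← sq_abs x]
  linarith [abs_sub_sin_le x, pow_succ |x| 2]

theorem two_div_pi_le_sinc {x : ℝ} (hx : |x| ≤ π / 2) : 2 / π ≤ sinc x := by
  wlog h0 : 0 ≤ x generalizing x
  · simpa using this (x := -x) (by rwa [abs_neg]) (by linarith)
  rcases h0.eq_or_lt with rfl | hpos
  · rw [sinc_zero, div_le_one pi_pos]; linarith [pi_gt_three]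
  rw [sinc_of_ne_zero hpos.ne', le_div_iff₀ hpos]
  exact mul_le_sin h0 (by rwa [abs_of_nonneg h0] at hx)

theorem abs_inv_sinc_sub_one_le {x : ℝ} (hx : |x| ≤ π / 2) : |(sinc x)⁻¹ - 1| ≤ x ^ 2 := by
  have hs : 2 / π ≤ sinc x := two_div_pi_le_sinc hx
  have hs0 : 0 < sinc x := lt_of_lt_of_le (by positivity) hs
  have : (sinc x)⁻¹ - 1 = -(sinc x - 1) / sinc x := by field_simp; ring
  rw [this, abs_div, abs_neg, abs_of_pos hs0, div_le_iff₀ hs0]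
  have h1 : 1 / 2 ≤ sinc x := le_trans (by rw [le_div_iff₀ pi_pos]; linarith [pi_le_four]) hs
  nlinarith [abs_sinc_sub_one_le x, sq_nonneg x]

theorem abs_cos_sub_one_le (x : ℝ) : |cos x - 1| ≤ x ^ 2 / 2 := by
  rw [abs_sub_comm, abs_of_nonneg (by linarith [cos_le_one x])]
  linarith [one_sub_sq_div_two_le_cos (x := x)]

theorem abs_sinc_cos_inv_sinc_sub_one_le {x r : ℝ} (hx : |x| ≤ r) (hr : r ≤ π / 2) :
    |sinc x - 1| ≤ r ^ 2 ∧ |cos x - 1| ≤ r ^ 2 ∧ |(sinc x)⁻¹ - 1| ≤ r ^ 2 := by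
  have hxr : x ^ 2 ≤ r ^ 2 := sq_le_sq' (abs_le.mp hx).1 (abs_le.mp hx).2
  refine ⟨?_, ?_, (abs_inv_sinc_sub_one_le (hx.trans hr)).trans hxr⟩
  · linarith [abs_sinc_sub_one_le x, sq_nonneg x]
  · linarith [abs_cos_sub_one_le x, sq_nonneg x]

end Real

theorem abs_list_prod_sub_one_le {l : List ℝ} {δ : ℝ} (hl : ∀ x ∈ l, |x - 1| ≤ δ) :
    |l.prod - 1| ≤ (1 + δ) ^ l.length - 1 := by
  induction l with
  | nil => simp
  | cons a l ih =>
    simp only [List.mem_cons, forall_eq_or_imp] at hl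
    have hp := ih hl.2
    have hp' : |l.prod| ≤ (1 + δ) ^ l.length := by
      linarith [abs_sub_abs_le_abs_sub l.prod 1, abs_one (α := ℝ)]
    calc |(a :: l).prod - 1| = |(a - 1) * l.prod + (l.prod - 1)| := by
          rw [List.prod_cons]; ring_nf
      _ ≤ δ * (1 + δ) ^ l.length + ((1 + δ) ^ l.length - 1) := by
          refine (abs_add_le _ _).trans (add_le_add ?_ hp)
          rw [abs_mul]
          exact mul_le_mul hl.1 hp' (abs_nonneg _) ((abs_nonneg _).trans hl.1)
      _ = (1 + δ) ^ (a :: l).length - 1 := by rw [List.length_cons, pow_succ]; ring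

theorem one_add_pow_sub_one_le {δ D : ℝ} (hδ : 0 ≤ δ) (hδD : δ ≤ D) (n : ℕ) :
    (1 + δ) ^ n - 1 ≤ n * (1 + D) ^ n * δ := by
  rw [← geom_sum_mul, add_sub_cancel_left]
  refine mul_le_mul_of_nonneg_right ?_ hδ
  calc ∑ i ∈ Finset.range n, (1 + δ) ^ i ≤ ∑ _i ∈ Finset.range n, (1 + D) ^ n := by
        refine Finset.sum_le_sum fun i hi => ?_
        exact (pow_le_pow_left₀ (by linarith) (by linarith) i).trans
          (pow_le_pow_right₀ (by linarith) (Finset.mem_range.mp hi).le)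
    _ = n * (1 + D) ^ n := by simp

theorem abs_list_prod_sub_one_le_mul {l : List ℝ} {δ D : ℝ} (hl : ∀ x ∈ l, |x - 1| ≤ δ)
    (hδ : 0 ≤ δ) (hδD : δ ≤ D) : |l.prod - 1| ≤ l.length * (1 + D) ^ l.length * δ :=
  (abs_list_prod_sub_one_le hl).trans (one_add_pow_sub_one_le hδ hδD _)

theorem le_mul_rpow_div_of_le_of_le {A C D E α : ℝ} (hA : 0 ≤ A) (hC : 0 ≤ C) (hD : 0 ≤ D)
    (hE : 0 ≤ E) (hα₀ : 0 ≤ α) (hα₁ : α ≤ 1) (h₀ : A ≤ C / D) (h₁ : A ≤ C * E / D) :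
    A ≤ C * E ^ α / D := by
  calc A = A ^ ((1 - α) + α) := by simp
    _ = A ^ (1 - α) * A ^ α := Real.rpow_add' hA (by simp)
    _ ≤ (C / D) ^ (1 - α) * (C * E / D) ^ α := by gcongr
    _ = C * E ^ α / D := by
        rw [mul_div_right_comm, Real.mul_rpow (by positivity) hE, ← mul_assoc,
          ← Real.rpow_add_of_nonneg (by positivity) (by linarith) hα₀]
        simp [mul_div_right_comm]

namespace FPU

theorem norm_eI (x : ℝ) : ‖eI x‖ = 1 := by
  rw [eI, mul_comm, Complex.norm_exp_ofReal_mul_I]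

theorem norm_eI_sub_eI_le (a b : ℝ) : ‖eI a - eI b‖ ≤ |a - b| := by
  have : eI a - eI b = eI b * (Complex.exp (Complex.I * ((a - b : ℝ) : ℂ)) - 1) := by
    simp only [eI, mul_sub, mul_one, ← Complex.exp_add]
    push_cast; ring_nf
  rw [this, norm_mul, norm_eI, one_mul]
  exact Real.norm_exp_I_mul_ofReal_sub_one_le

theorem norm_ofReal_mul_eI_sub_le_abs_add_abs (m₁ m₂ a b : ℝ) :
    ‖(m₁ : ℂ) * eI a - (m₂ : ℂ) * eI b‖ ≤ |m₁| + |m₂| := by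
  refine (norm_sub_le _ _).trans_eq ?_
  simp [norm_eI]

theorem norm_ofReal_mul_eI_sub_le (m₁ m₂ a b : ℝ) :
    ‖(m₁ : ℂ) * eI a - (m₂ : ℂ) * eI b‖ ≤ |m₁ - m₂| + |m₁| * |a - b| := by
  have : (m₁ : ℂ) * eI a - (m₂ : ℂ) * eI b = ((m₁ - m₂ : ℝ) : ℂ) * eI b + m₁ * (eI a - eI b) := by
    push_cast; ring
  rw [this]
  refine (norm_add_le _ _).trans ?_
  simp only [norm_mul, norm_eI, Complex.norm_real, Real.norm_eq_abs, mul_one]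
  gcongr
  exact norm_eI_sub_eI_le a b

def maxAbs3 (a b c : ℤ) : ℝ := max |(a : ℝ)| (max |(b : ℝ)| |(c : ℝ)|)

def kdvCoeff (k₁ k₂ k₃ : ℤ) : ℝ := 2 / ((k₁ : ℝ) * Psi3 k₁ k₂ k₃)

def fpuCoeff (h : ℝ) (k k₁ k₂ k₃ : ℤ) : ℝ :=
  2 * Real.sin (h * k / 2) ^ 2 * Real.cos (h * k / 4) * Real.cos (h * (k₂ + k₃) / 4) /
    (h * (k : ℝ) ^ 2 * Real.sin (h * k₁ / 4) * Phi3 h k₁ k₂ k₃)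

-- `M3 h σ t k k₁ k₂ k₃` is `𝓜_h^{3,±}(t, k, k₁, k₂, k₃)` with `±1 = σ`.
def M3 (h σ t : ℝ) (k k₁ k₂ k₃ : ℤ) : ℂ :=
  (kdvCoeff k₁ k₂ k₃ : ℂ) * eI (σ * t * Psi3 k₁ k₂ k₃) -
    (fpuCoeff h k k₁ k₂ k₃ : ℂ) * eI (σ * t * Phi3 h k₁ k₂ k₃)

def sincProd (h : ℝ) (a b c : ℤ) : ℝ :=
  [Real.sinc (h * (a + b) / 4), Real.sinc (h * (b + c) / 4), Real.sinc (h * (a + c) / 4)].prod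

def fpuCorrection (h : ℝ) (k k₁ k₂ k₃ : ℤ) : ℝ :=
  [Real.sinc (h * k / 2), Real.sinc (h * k / 2), Real.cos (h * k / 4),
    Real.cos (h * (k₂ + k₃) / 4), (Real.sinc (h * k₁ / 4))⁻¹, (Real.sinc (h * (k₁ + k₂) / 4))⁻¹,
    (Real.sinc (h * (k₂ + k₃) / 4))⁻¹, (Real.sinc (h * (k₁ + k₃) / 4))⁻¹].prod

section

variable {h σ t : ℝ} {k k₁ k₂ k₃ : ℤ}

theorem Phi3_eq_Psi3_mul_sincProd (hh : h ≠ 0) (a b c : ℤ) :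
    Phi3 h a b c = Psi3 a b c * sincProd h a b c := by
  simp only [Phi3, Psi3, sincProd, List.prod_cons, List.prod_nil, mul_one, Real.sin_eq_mul_sinc]
  push_cast
  field_simp
  ring

theorem fpuCoeff_eq_kdvCoeff_mul (hh : h ≠ 0) (hk : k ≠ 0) :
    fpuCoeff h k k₁ k₂ k₃ = kdvCoeff k₁ k₂ k₃ * fpuCorrection h k k₁ k₂ k₃ := by
  have hk' : (k : ℝ) ≠ 0 := Int.cast_ne_zero.mpr hk
  have hcancel : (h * k / 2) ^ 2 / (h * k ^ 2 * (h * k₁ / 4)) = 1 / k₁ := by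
    field_simp; norm_num
  simp only [fpuCoeff, kdvCoeff, fpuCorrection, Phi3_eq_Psi3_mul_sincProd hh, sincProd,
    List.prod_cons, List.prod_nil, mul_one, Real.sin_eq_mul_sinc (h * k / 2),
    Real.sin_eq_mul_sinc (h * k₁ / 4)]
  linear_combination 2 * Real.sinc (h * k / 2) ^ 2 * Real.cos (h * k / 4) *
      Real.cos (h * (k₂ + k₃) / 4) / (Real.sinc (h * k₁ / 4) * Psi3 k₁ k₂ k₃ *
      (Real.sinc (h * (k₁ + k₂) / 4) * Real.sinc (h * (k₂ + k₃) / 4) *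
        Real.sinc (h * (k₁ + k₃) / 4))) * hcancel

theorem two_mul_abs_le_three_mul_abs_pairProd (hk : k = k₁ + k₂ + k₃)
    (hpairs : (k₁ + k₂) * (k₂ + k₃) * (k₁ + k₃) ≠ 0) :
    ∀ j ∈ [k, k₁, k₂, k₃], 2 * |j| ≤ 3 * |(k₁ + k₂) * (k₂ + k₃) * (k₁ + k₃)| := by
  obtain ⟨⟨h₁₂, h₂₃⟩, h₁₃⟩ : ((k₁ + k₂ ≠ 0 ∧ k₂ + k₃ ≠ 0) ∧ k₁ + k₃ ≠ 0) := by
    simpa [not_or] using hpairs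
  have le_abs_mul {x y z : ℤ} (hy : y ≠ 0) (hz : z ≠ 0) : |x| ≤ |x * y * z| := by
    rw [abs_mul, abs_mul]
    calc |x| = |x| * 1 * 1 := by ring
      _ ≤ |x| * |y| * |z| := by gcongr <;> exact Int.one_le_abs ‹_›
  have b₁₂ := abs_le.mp (le_abs_mul (x := k₁ + k₂) h₂₃ h₁₃)
  have b₂₃ : |k₂ + k₃| ≤ |(k₁ + k₂) * (k₂ + k₃) * (k₁ + k₃)| := by
    rw [show (k₁ + k₂) * (k₂ + k₃) = (k₂ + k₃) * (k₁ + k₂) by ring]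
    exact le_abs_mul h₁₂ h₁₃
  have b₁₃ : |k₁ + k₃| ≤ |(k₁ + k₂) * (k₂ + k₃) * (k₁ + k₃)| := by
    rw [show (k₁ + k₂) * (k₂ + k₃) * (k₁ + k₃) = (k₁ + k₃) * (k₁ + k₂) * (k₂ + k₃) by ring]
    exact le_abs_mul h₁₂ h₂₃
  replace b₂₃ := abs_le.mp b₂₃
  replace b₁₃ := abs_le.mp b₁₃
  simp only [List.mem_cons, List.not_mem_nil, or_false]
  rintro j (rfl | rfl | rfl | rfl) <;> rw [← abs_two, ← abs_mul, abs_le] <;> constructor <;> omega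

theorem max_le_twelve_mul_abs_Psi3 (hk : k = k₁ + k₂ + k₃)
    (hpairs : (k₁ + k₂) * (k₂ + k₃) * (k₁ + k₃) ≠ 0) :
    max |(k : ℝ)| (maxAbs3 k₁ k₂ k₃) ≤ 12 * |Psi3 k₁ k₂ k₃| := by
  have key := two_mul_abs_le_three_mul_abs_pairProd hk hpairs
  have hPsi : 24 * |Psi3 k₁ k₂ k₃| = 3 * |(((k₁ + k₂) * (k₂ + k₃) * (k₁ + k₃) : ℤ) : ℝ)| := by
    rw [Psi3, abs_mul, abs_neg]; push_cast; norm_num; ring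
  have bound : ∀ j ∈ [k, k₁, k₂, k₃], |(j : ℝ)| ≤ 12 * |Psi3 k₁ k₂ k₃| := fun j hj => by
    have := key j hj
    have : 2 * |(j : ℝ)| ≤ 3 * |(((k₁ + k₂) * (k₂ + k₃) * (k₁ + k₃) : ℤ) : ℝ)| := by
      simp only [← Int.cast_abs]; exact_mod_cast this
    linarith
  simp only [List.mem_cons, List.not_mem_nil, or_false, forall_eq_or_imp, forall_eq] at bound
  exact max_le bound.1 (max_le bound.2.1 (max_le bound.2.2.1 bound.2.2.2))

theorem Psi3_ne_zero (hpairs : (k₁ + k₂) * (k₂ + k₃) * (k₁ + k₃) ≠ 0) : Psi3 k₁ k₂ k₃ ≠ 0 := by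
  have : (((k₁ + k₂) * (k₂ + k₃) * (k₁ + k₃) : ℤ) : ℝ) ≠ 0 := Int.cast_ne_zero.mpr hpairs
  rw [Psi3]; push_cast at this ⊢
  exact mul_ne_zero (by norm_num) this

theorem kdvCoeff_mul_Psi3 (hpairs : (k₁ + k₂) * (k₂ + k₃) * (k₁ + k₃) ≠ 0) :
    kdvCoeff k₁ k₂ k₃ * Psi3 k₁ k₂ k₃ = 2 / k₁ := by
  rw [kdvCoeff]
  field_simp [Psi3_ne_zero hpairs]

theorem abs_kdvCoeff_le (hk : k = k₁ + k₂ + k₃) (hk₁ : k₁ ≠ 0)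
    (hpairs : (k₁ + k₂) * (k₂ + k₃) * (k₁ + k₃) ≠ 0) :
    |kdvCoeff k₁ k₂ k₃| ≤ 24 / (|(k₁ : ℝ)| * max |(k : ℝ)| (maxAbs3 k₁ k₂ k₃)) := by
  have hk₁' : 0 < |(k₁ : ℝ)| := abs_pos.mpr (Int.cast_ne_zero.mpr hk₁)
  have hK : |(k₁ : ℝ)| ≤ max |(k : ℝ)| (maxAbs3 k₁ k₂ k₃) :=
    (le_max_left _ _).trans (le_max_right _ _)
  rw [kdvCoeff, abs_div, abs_mul, abs_two,
    show (2 : ℝ) / (|(k₁ : ℝ)| * |Psi3 k₁ k₂ k₃|) = 24 / (|(k₁ : ℝ)| * (12 * |Psi3 k₁ k₂ k₃|)) by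
      ring]
  have hK₀ : 0 < max |(k : ℝ)| (maxAbs3 k₁ k₂ k₃) := hk₁'.trans_le hK
  gcongr
  exact max_le_twelve_mul_abs_Psi3 hk hpairs

theorem abs_mul_div_le {y K : ℝ} (n : ℝ) (hh : 0 ≤ h) (hn : 0 < n) (hy : |y| ≤ n * K / 2) :
    |h * y / n| ≤ h * K / 2 := by
  rw [abs_div, abs_mul, abs_of_nonneg hh, abs_of_pos hn, div_le_iff₀ hn]
  nlinarith

theorem sq_half_mul_le_four {K : ℝ} (hh : 0 ≤ h) (hK₀ : 0 ≤ K) (hK : h * K ≤ π) :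
    (h * K / 2) ^ 2 ≤ 4 := by
  have : h * K / 2 ≤ 2 := by linarith [Real.pi_le_four]
  nlinarith [mul_nonneg hh hK₀]

theorem abs_sincProd_sub_one_le {a b c : ℤ} {K : ℝ} (hh : 0 ≤ h) (ha : |(a : ℝ)| ≤ K)
    (hb : |(b : ℝ)| ≤ K) (hc : |(c : ℝ)| ≤ K) (hK : h * K ≤ π) :
    |sincProd h a b c - 1| ≤ 375 * (h * K / 2) ^ 2 := by
  have hr : h * K / 2 ≤ π / 2 := by linarith
  have pair {x y : ℤ} (hx : |(x : ℝ)| ≤ K) (hy : |(y : ℝ)| ≤ K) :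
      |Real.sinc (h * (x + y) / 4) - 1| ≤ (h * K / 2) ^ 2 :=
    (Real.abs_sinc_cos_inv_sinc_sub_one_le
      (abs_mul_div_le 4 hh four_pos (by linarith [abs_add_le (x : ℝ) y])) hr).1
  rw [sincProd]
  refine (abs_list_prod_sub_one_le_mul (D := 4) ?_ (sq_nonneg _)
    (sq_half_mul_le_four hh ((abs_nonneg _).trans ha) hK)).trans (by norm_num)
  simp only [List.mem_cons, List.not_mem_nil, or_false]
  rintro x (rfl | rfl | rfl) <;> apply pair <;> assumption

theorem abs_fpuCorrection_sub_one_le {K : ℝ} (hh : 0 ≤ h) (hk : |(k : ℝ)| ≤ K)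
    (hk₁ : |(k₁ : ℝ)| ≤ K) (hk₂ : |(k₂ : ℝ)| ≤ K) (hk₃ : |(k₃ : ℝ)| ≤ K) (hK : h * K ≤ π) :
    |fpuCorrection h k k₁ k₂ k₃ - 1| ≤ 3125000 * (h * K / 2) ^ 2 := by
  have hr : h * K / 2 ≤ π / 2 := by linarith
  have factor {x : ℝ} (n : ℝ) (hn : 0 < n) (hx : |x| ≤ n * K / 2) :=
    Real.abs_sinc_cos_inv_sinc_sub_one_le (abs_mul_div_le n hh hn hx) hr
  have hsum {x y : ℝ} (hx : |x| ≤ K) (hy : |y| ≤ K) : |x + y| ≤ 4 * K / 2 := by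
    linarith [abs_add_le x y]
  rw [fpuCorrection]
  refine (abs_list_prod_sub_one_le_mul (D := 4) ?_ (sq_nonneg _)
    (sq_half_mul_le_four hh ((abs_nonneg _).trans hk) hK)).trans (by norm_num)
  simp only [List.mem_cons, List.not_mem_nil, or_false]
  rintro x (rfl | rfl | rfl | rfl | rfl | rfl | rfl | rfl)
  · exact (factor 2 two_pos (by linarith)).1
  · exact (factor 2 two_pos (by linarith)).1
  · exact (factor 4 four_pos (by linarith [abs_nonneg (k : ℝ)])).2.1
  · exact (factor 4 four_pos (hsum hk₂ hk₃)).2.1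
  · exact (factor 4 four_pos (by linarith [abs_nonneg (k₁ : ℝ)])).2.2
  · exact (factor 4 four_pos (hsum hk₁ hk₂)).2.2
  · exact (factor 4 four_pos (hsum hk₂ hk₃)).2.2
  · exact (factor 4 four_pos (hsum hk₁ hk₃)).2.2

theorem le_maxAbs3 (k₁ k₂ k₃ : ℤ) :
    |(k₁ : ℝ)| ≤ maxAbs3 k₁ k₂ k₃ ∧ |(k₂ : ℝ)| ≤ maxAbs3 k₁ k₂ k₃ ∧
      |(k₃ : ℝ)| ≤ maxAbs3 k₁ k₂ k₃ :=
  ⟨le_max_left _ _, (le_max_left _ _).trans (le_max_right _ _),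
    (le_max_right _ _).trans (le_max_right _ _)⟩

theorem norm_M3_le_div (hh : 0 < h) (hk : k = k₁ + k₂ + k₃) (hk₀ : k ≠ 0) (hk₁ : k₁ ≠ 0)
    (hpairs : (k₁ + k₂) * (k₂ + k₃) * (k₁ + k₃) ≠ 0)
    (hK : h * max |(k : ℝ)| (maxAbs3 k₁ k₂ k₃) ≤ π) :
    ‖M3 h σ t k k₁ k₂ k₃‖ ≤ 10 ^ 9 / (|(k₁ : ℝ)| * maxAbs3 k₁ k₂ k₃) := by
  obtain ⟨hk₁K, hk₂K, hk₃K⟩ := le_maxAbs3 k₁ k₂ k₃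
  have hk₁' : 0 < |(k₁ : ℝ)| := abs_pos.mpr (Int.cast_ne_zero.mpr hk₁)
  have hKm : 0 < |(k₁ : ℝ)| * maxAbs3 k₁ k₂ k₃ := mul_pos hk₁' (hk₁'.trans_le hk₁K)
  have hm := abs_kdvCoeff_le hk hk₁ hpairs
  have hF := abs_fpuCorrection_sub_one_le hh.le (le_max_left _ _) (hk₁K.trans (le_max_right _ _))
    (hk₂K.trans (le_max_right _ _)) (hk₃K.trans (le_max_right _ _)) hK
  have hδ := sq_half_mul_le_four hh.le ((abs_nonneg _).trans (le_max_left _ _)) hK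
  have hF' : |fpuCorrection h k k₁ k₂ k₃| ≤ |fpuCorrection h k k₁ k₂ k₃ - 1| + 1 := by
    simpa using abs_sub_abs_le_abs_sub (fpuCorrection h k k₁ k₂ k₃) 1
  refine (norm_ofReal_mul_eI_sub_le_abs_add_abs _ _ _ _).trans ?_
  rw [fpuCoeff_eq_kdvCoeff_mul hh.ne' hk₀, abs_mul]
  calc _ ≤ |kdvCoeff k₁ k₂ k₃| * (2 + |fpuCorrection h k k₁ k₂ k₃ - 1|) := by
        nlinarith [abs_nonneg (kdvCoeff k₁ k₂ k₃)]
    _ ≤ 24 / (|(k₁ : ℝ)| * maxAbs3 k₁ k₂ k₃) * (2 + 3125000 * 4) := by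
        gcongr
        · exact hm.trans (by gcongr; exact le_max_right _ _)
        · linarith
    _ ≤ 10 ^ 9 / (|(k₁ : ℝ)| * maxAbs3 k₁ k₂ k₃) := by
        rw [div_mul_eq_mul_div]; gcongr; norm_num

theorem abs_kdvCoeff_sub_fpuCoeff_le (hh : 0 < h) (hh₁ : h ≤ 1) (hk : k = k₁ + k₂ + k₃)
    (hk₀ : k ≠ 0) (hk₁ : k₁ ≠ 0) (hpairs : (k₁ + k₂) * (k₂ + k₃) * (k₁ + k₃) ≠ 0)
    (hK : h * max |(k : ℝ)| (maxAbs3 k₁ k₂ k₃) ≤ π) :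
    |kdvCoeff k₁ k₂ k₃ - fpuCoeff h k k₁ k₂ k₃| ≤
      18750000 * (h * max |(k : ℝ)| (maxAbs3 k₁ k₂ k₃) ^ 2 / (|(k₁ : ℝ)| * maxAbs3 k₁ k₂ k₃)) := by
  set K := max |(k : ℝ)| (maxAbs3 k₁ k₂ k₃)
  obtain ⟨hk₁K, hk₂K, hk₃K⟩ := le_maxAbs3 k₁ k₂ k₃
  have hKmK : maxAbs3 k₁ k₂ k₃ ≤ K := le_max_right _ _
  have hk₁' : 0 < |(k₁ : ℝ)| := abs_pos.mpr (Int.cast_ne_zero.mpr hk₁)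
  have hKm : 0 < maxAbs3 k₁ k₂ k₃ := hk₁'.trans_le hk₁K
  have hF := abs_fpuCorrection_sub_one_le hh.le (le_max_left _ _) (hk₁K.trans hKmK)
    (hk₂K.trans hKmK) (hk₃K.trans hKmK) hK
  have hm := abs_kdvCoeff_le hk hk₁ hpairs
  rw [fpuCoeff_eq_kdvCoeff_mul hh.ne' hk₀, ← mul_one_sub, abs_mul, abs_sub_comm]
  calc _ ≤ 24 / (|(k₁ : ℝ)| * K) * (3125000 * (h * K / 2) ^ 2) := by gcongr
    _ = 18750000 * (h * K ^ 2 / (|(k₁ : ℝ)| * maxAbs3 k₁ k₂ k₃)) *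
        (h * maxAbs3 k₁ k₂ k₃ / K) := by
        field_simp; ring
    _ ≤ 18750000 * (h * K ^ 2 / (|(k₁ : ℝ)| * maxAbs3 k₁ k₂ k₃)) := by
        refine mul_le_of_le_one_right (by positivity) ?_
        rw [div_le_one (hKm.trans_le hKmK)]
        nlinarith

theorem abs_kdvCoeff_mul_abs_Psi3_sub_Phi3_le (hh : 0 < h) (hk₁ : k₁ ≠ 0)
    (hpairs : (k₁ + k₂) * (k₂ + k₃) * (k₁ + k₃) ≠ 0)
    (hK : h * max |(k : ℝ)| (maxAbs3 k₁ k₂ k₃) ≤ π) :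
    |kdvCoeff k₁ k₂ k₃| * |Psi3 k₁ k₂ k₃ - Phi3 h k₁ k₂ k₃| ≤
      750 * (h * max |(k : ℝ)| (maxAbs3 k₁ k₂ k₃) ^ 2 / (|(k₁ : ℝ)| * maxAbs3 k₁ k₂ k₃)) := by
  set K := max |(k : ℝ)| (maxAbs3 k₁ k₂ k₃)
  obtain ⟨hk₁K, hk₂K, hk₃K⟩ := le_maxAbs3 k₁ k₂ k₃
  have hKmK : maxAbs3 k₁ k₂ k₃ ≤ K := le_max_right _ _
  have hk₁' : 0 < |(k₁ : ℝ)| := abs_pos.mpr (Int.cast_ne_zero.mpr hk₁)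
  have hKm : 0 < maxAbs3 k₁ k₂ k₃ := hk₁'.trans_le hk₁K
  have hS := abs_sincProd_sub_one_le hh.le (hk₁K.trans hKmK) (hk₂K.trans hKmK)
    (hk₃K.trans hKmK) hK
  rw [Phi3_eq_Psi3_mul_sincProd hh.ne', ← mul_one_sub, abs_mul, ← mul_assoc, ← abs_mul,
    kdvCoeff_mul_Psi3 hpairs, abs_div, abs_two, abs_sub_comm]
  calc _ ≤ 2 / |(k₁ : ℝ)| * (375 * (h * K / 2) ^ 2) := by gcongr
    _ = 750 * (h * K ^ 2 / (|(k₁ : ℝ)| * maxAbs3 k₁ k₂ k₃)) * (h * maxAbs3 k₁ k₂ k₃ / 4) := by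
        field_simp; ring
    _ ≤ 750 * (h * K ^ 2 / (|(k₁ : ℝ)| * maxAbs3 k₁ k₂ k₃)) := by
        refine mul_le_of_le_one_right (by positivity) ?_
        rw [div_le_one four_pos]
        nlinarith [Real.pi_le_four]

theorem norm_M3_le_mul_div (hh : 0 < h) (hh₁ : h ≤ 1) (hσ : |σ| = 1) (hk : k = k₁ + k₂ + k₃)
    (hk₀ : k ≠ 0) (hk₁ : k₁ ≠ 0) (hpairs : (k₁ + k₂) * (k₂ + k₃) * (k₁ + k₃) ≠ 0)
    (hK : h * max |(k : ℝ)| (maxAbs3 k₁ k₂ k₃) ≤ π) :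
    ‖M3 h σ t k k₁ k₂ k₃‖ ≤ 10 ^ 9 * (h * (1 + |t|) * max |(k : ℝ)| (maxAbs3 k₁ k₂ k₃) ^ 2) /
      (|(k₁ : ℝ)| * maxAbs3 k₁ k₂ k₃) := by
  have hcoeff := abs_kdvCoeff_sub_fpuCoeff_le hh hh₁ hk hk₀ hk₁ hpairs hK
  have hphase := abs_kdvCoeff_mul_abs_Psi3_sub_Phi3_le hh hk₁ hpairs hK
  set Q := h * max |(k : ℝ)| (maxAbs3 k₁ k₂ k₃) ^ 2 / (|(k₁ : ℝ)| * maxAbs3 k₁ k₂ k₃) with hQ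
  have hQ₀ : 0 ≤ Q := div_nonneg (by positivity)
    (mul_nonneg (abs_nonneg _) ((abs_nonneg _).trans (le_maxAbs3 k₁ k₂ k₃).1))
  refine (norm_ofReal_mul_eI_sub_le _ _ _ _).trans ?_
  rw [← mul_sub, abs_mul, abs_mul, hσ, one_mul, mul_left_comm]
  calc _ ≤ 18750000 * Q + |t| * (750 * Q) := by gcongr
    _ ≤ 10 ^ 9 * (1 + |t|) * Q := by nlinarith [abs_nonneg t]
    _ = _ := by rw [hQ]; ring

end

/-- bound for the cubic multiplier `𝓜_h^{3,±}`. -/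
theorem M3_bound :
    ∃ C : ℝ, 0 < C ∧ ∀ h : ℝ, 0 < h → h ≤ 1 → ∀ α : ℝ, 0 ≤ α → α ≤ 1 →
      ∀ t σ : ℝ, σ = 1 ∨ σ = -1 →
      ∀ k k₁ k₂ k₃ : ℤ,
        |(k₁ : ℝ)| ≤ Real.pi / h → |(k₂ : ℝ)| ≤ Real.pi / h → |(k₃ : ℝ)| ≤ Real.pi / h →
        k = k₁ + k₂ + k₃ → k ≠ 0 → |(k : ℝ)| ≤ Real.pi / h →
        k₁ * k₂ * k₃ ≠ 0 → (k₁ + k₂) * (k₂ + k₃) * (k₁ + k₃) ≠ 0 →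
        ‖((2 / ((k₁ : ℝ) * Psi3 k₁ k₂ k₃) : ℝ) : ℂ) * eI (σ * t * Psi3 k₁ k₂ k₃) -
            ((2 * Real.sin (h * k / 2) ^ 2 * Real.cos (h * k / 4) *
                Real.cos (h * (k₂ + k₃) / 4) /
              (h * (k : ℝ) ^ 2 * Real.sin (h * k₁ / 4) * Phi3 h k₁ k₂ k₃) : ℝ) : ℂ) *
              eI (σ * t * Phi3 h k₁ k₂ k₃)‖
          ≤ C * h ^ α * (1 + |t|) ^ α *
              (max |(k : ℝ)| (max |(k₁ : ℝ)| (max |(k₂ : ℝ)| |(k₃ : ℝ)|))) ^ (2 * α) /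
              (|(k₁ : ℝ)| * max |(k₁ : ℝ)| (max |(k₂ : ℝ)| |(k₃ : ℝ)|)) := by
  refine ⟨10 ^ 9, by norm_num, ?_⟩
  intro h hh hh₁ α hα₀ hα₁ t σ hσ k k₁ k₂ k₃ hb₁ hb₂ hb₃ hk hk₀ hb hk₁₂₃ hpairs
  have hk₁ : k₁ ≠ 0 := left_ne_zero_of_mul (left_ne_zero_of_mul hk₁₂₃)
  have hσ' : |σ| = 1 := by rcases hσ with rfl | rfl <;> norm_num
  have hK : h * max |(k : ℝ)| (maxAbs3 k₁ k₂ k₃) ≤ π := by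
    rw [mul_comm, ← le_div_iff₀ hh]
    exact max_le hb (max_le hb₁ (max_le hb₂ hb₃))
  have hD : 0 < |(k₁ : ℝ)| * maxAbs3 k₁ k₂ k₃ := by
    have := abs_pos.mpr (Int.cast_ne_zero (α := ℝ) |>.mpr hk₁)
    exact mul_pos this (this.trans_le (le_maxAbs3 k₁ k₂ k₃).1)
  have hK₀ : 0 ≤ max |(k : ℝ)| (maxAbs3 k₁ k₂ k₃) := (abs_nonneg _).trans (le_max_left _ _)
  have := le_mul_rpow_div_of_le_of_le (norm_nonneg (M3 h σ t k k₁ k₂ k₃)) (by norm_num) hD.le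
    (by positivity) hα₀ hα₁ (norm_M3_le_div hh hk hk₀ hk₁ hpairs hK)
    (norm_M3_le_mul_div hh hh₁ hσ' hk hk₀ hk₁ hpairs hK)
  rw [Real.mul_rpow (by positivity) (by positivity), Real.mul_rpow hh.le (by positivity),
    ← Real.rpow_natCast _ 2, ← Real.rpow_mul hK₀] at this
  refine this.trans_eq ?_
  simp only [maxAbs3, Nat.cast_ofNat]
  ring

end FPU

end
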